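/- arXiv:2407.02326 — 3 statements merged into one kernel-verified Lean document; each statement's English description precedes it below -/
import Mathlib

section
/- If a linear order L is order-isomorphic to the linguage of a deterministic finite automaton over {0,1}, then so is L·ω := Σ_{n ∈ ω} L, the ω-indexed sum of copies of L (i.e. countably many copies of L arranged in the order type of the natural numbers). -/
/-- A deterministic finite automaton with a partial transition function. -/
structure PDFA (σ : Type) where
  /-- the (finite) set of states -/
  State : Type
  finState : Finite State
  /-- the start state -/
  start : State
  /-- the set of accept states -/
  accept : Set State
  /-- the partial transition function -/
  step : State → σ → Option State

namespace PDFA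

variable {σ : Type} (M : PDFA σ)

/-- The extended (partial) transition function `δ̂`, reading the word left to right. -/
def run (q : M.State) (w : List σ) : Option M.State :=
  w.foldlM (fun q a => M.step q a) q

/-- The language accepted by the automaton. -/
def lang : Set (List σ) := {w | ∃ q ∈ M.accept, M.run M.start w = some q}

end PDFA

/-- The inorder relation `<₂` on finite binary words: `x <₂ y` iff, writing
`x = w·x'`, `y = w·y'` with `w` the longest common prefix, either `x'` begins
with `0`(=`false`) or `y'` begins with `1`(=`true`). -/
def inlt : List Bool → List Bool → Prop
  | [], [] => False
  | [], b :: _ => b = true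
  | a :: _, [] => a = false
  | a :: x, b :: y => (a = false ∧ b = true) ∨ (a = b ∧ inlt x y)

/-- `(L, r)` is order-isomorphic to the linguage `(L(M), <₂)` of some
deterministic finite automaton `M` over `{0,1}`. -/
def IsLinguageOf (L : Type) (r : L → L → Prop) : Prop :=
  ∃ M : PDFA Bool, Nonempty (r ≃r fun x y : M.lang => inlt x.1 y.1)

/-!
Tag the `n`-th copy of `L(M)` by the prefix `1ⁿ0`. No tag is a prefix of another and
`1ⁿ0 <₂ 1ᵐ0` iff `n < m`, so `<₂` on tagged words compares the tags first and then the words of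
`L(M)`. The tagged language is recognised by adding a new start state that loops on `1` and
enters the start state of `M` on `0`.
-/

def unaryTag (n : ℕ) (v : List Bool) : List Bool :=
  List.replicate n true ++ false :: v

@[simp]
theorem unaryTag_zero (v : List Bool) : unaryTag 0 v = false :: v := rfl

@[simp]
theorem unaryTag_succ (n : ℕ) (v : List Bool) : unaryTag (n + 1) v = true :: unaryTag n v := rfl

theorem unaryTag_injective2 : Function.Injective2 unaryTag := by
  intro n
  induction n with
  | zero => rintro (_ | m) v u h <;> simp_all
  | succ n ih =>
    rintro (_ | m) v u h
    · simp at h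
    · simpa using ih (by simpa using h)

theorem inlt_unaryTag_iff (n m : ℕ) (v u : List Bool) :
    inlt (unaryTag n v) (unaryTag m u) ↔ n < m ∨ n = m ∧ inlt v u := by
  induction n generalizing m with
  | zero => cases m <;> simp [inlt]
  | succ n ih => cases m <;> simp [inlt, ih]

namespace PDFA

theorem run_cons {σ : Type} (M : PDFA σ) (q : M.State) (a : σ) (w : List σ) :
    M.run q (a :: w) = (M.step q a).bind (M.run · w) := by
  simp [run, List.foldlM]

-- Reducible, so that terms of `Option M.State` are accepted as states of `M.omegaMul`.
@[reducible]
def omegaMul (M : PDFA Bool) : PDFA Bool where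
  State := Option M.State
  finState := have := M.finState; inferInstance
  start := none
  accept := some '' M.accept
  step
    | none, true => some none
    | none, false => some (some M.start)
    | some q, a => (M.step q a).map some

variable (M : PDFA Bool)

theorem omegaMul_run_some (q : M.State) (w : List Bool) :
    M.omegaMul.run (some q) w = (M.run q w).map some := by
  induction w generalizing q with
  | nil => rfl
  | cons a w ih =>
    rw [run_cons, run_cons]
    cases h : M.step q a <;> simp [h, ih]

theorem omegaMul_run_unaryTag (n : ℕ) (v : List Bool) :
    M.omegaMul.run none (unaryTag n v) = (M.run M.start v).map some := by
  induction n with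
  | zero => simp [run_cons, omegaMul_run_some]
  | succ n ih => simpa [run_cons] using ih

theorem exists_unaryTag_of_omegaMul_run {w : List Bool} {q : M.State}
    (h : M.omegaMul.run none w = some (some q)) :
    ∃ n v, unaryTag n v = w ∧ M.run M.start v = some q := by
  induction w with
  | nil => cases h
  | cons a w ih =>
    cases a with
    | true =>
      obtain ⟨n, v, rfl, hv⟩ := ih (by simpa [run_cons] using h)
      exact ⟨n + 1, v, rfl, hv⟩
    | false =>
      simp only [run_cons, Option.bind_some, omegaMul_run_some, Option.map_eq_some_iff,
        Option.some_inj, exists_eq_right] at h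
      exact ⟨0, w, rfl, h⟩

theorem mem_omegaMul_lang_iff {w : List Bool} :
    w ∈ M.omegaMul.lang ↔ ∃ n, ∃ v ∈ M.lang, unaryTag n v = w := by
  constructor
  · rintro ⟨_, ⟨q, hq, rfl⟩, hw⟩
    obtain ⟨n, v, rfl, hv⟩ := M.exists_unaryTag_of_omegaMul_run hw
    exact ⟨n, v, ⟨q, hq, hv⟩, rfl⟩
  · rintro ⟨n, v, ⟨q, hq, hv⟩, rfl⟩
    exact ⟨some q, ⟨q, hq, rfl⟩, by simp [omegaMul_run_unaryTag, hv]⟩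

noncomputable def omegaMulIso :
    Prod.Lex ((· < ·) : ℕ → ℕ → Prop) (fun x y : M.lang => inlt x.1 y.1) ≃r
      fun x y : M.omegaMul.lang => inlt x.1 y.1 where
  toEquiv := Equiv.ofBijective
    (fun p => ⟨unaryTag p.1 p.2.1, M.mem_omegaMul_lang_iff.2 ⟨p.1, p.2.1, p.2.2, rfl⟩⟩)
    ⟨fun p p' h => by
      obtain ⟨hn, hv⟩ := unaryTag_injective2 (Subtype.ext_iff.1 h)
      exact Prod.ext hn (Subtype.ext hv),
    fun w => by
      obtain ⟨n, v, hv, hw⟩ := M.mem_omegaMul_lang_iff.1 w.2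
      exact ⟨(n, ⟨v, hv⟩), Subtype.ext hw⟩⟩
  map_rel_iff' := by
    intro p p'
    rw [Prod.lex_def]
    exact inlt_unaryTag_iff _ _ _ _

end PDFA

/-- If `L` is order-isomorphic to the linguage of a DFA over `{0,1}`,
then so is `L·ω = Σ_{n ∈ ω} L`, the `ω`-indexed sum of copies of `L` (pairs `(n, a)`
ordered by the natural number `n` first). -/
theorem isLinguage_omegaMul (L : Type) (r : L → L → Prop) (h : IsLinguageOf L r) :
    IsLinguageOf (ℕ × L) (Prod.Lex (· < ·) r) := by
  obtain ⟨M, ⟨e⟩⟩ := h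
  exact ⟨M.omegaMul, ⟨(RelIso.prodLexCongr (RelIso.refl _) e).trans M.omegaMulIso⟩⟩
end

section
/- For every n ≥ 1, if the linear orders L₀, L₁, …, L_{n−1} are each order-isomorphic to the linguage of a deterministic finite automaton over {0,1}, then so is their n-ary shuffle Ξ(L₀, L₁, …, L_{n−1}). -/
/-!
Cantor's back-and-forth argument, run with colours, shows that two countable linear orders
without endpoints, each coloured so that every colour class is dense, are isomorphic by a
colour-preserving isomorphism. Binary words under `<₂`, coloured by their length mod `n`, form
such an order, so the shuffle is the sum over words `a` of `L_{|a| mod n}`. An automaton realises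
this sum: it reads `a` with every letter doubled while counting its length mod `n`, then the
separator `01` (which cannot occur at an even position of a doubled word), and then runs the
automaton of `L_{|a| mod n}`. Such codes are compared by `<₂` first by `a` and then by the tail.
-/

/-- Reading `false`, the end of the word and `true` as `0 < 1 < 2` turns `<₂` into the
lexicographic order. -/
def inorderKey (x : List Bool) : List ℕ := x.map (2 * ·.toNat) ++ [1]

theorem inlt_iff_inorderKey_lt : ∀ x y, inlt x y ↔ inorderKey x < inorderKey y
  | [], [] => by simp [inlt, inorderKey]
  | [], b :: y => by cases b <;> simp [inlt, inorderKey, List.cons_lt_cons_iff]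
  | a :: x, [] => by cases a <;> simp [inlt, inorderKey, List.cons_lt_cons_iff]
  | a :: x, b :: y => by
    have ih := inlt_iff_inorderKey_lt x y
    simp only [inorderKey] at ih
    cases a <;> cases b <;> simp [inlt, inorderKey, List.cons_lt_cons_iff, ih]

theorem inorderKey_injective : Function.Injective inorderKey := by
  intro x y h
  have : Function.Injective (2 * ·.toNat : Bool → ℕ) := by decide
  exact List.map_injective_iff.mpr this (List.append_cancel_right h)

theorem inlt_append_true : ∀ x l : List Bool, inlt x (x ++ true :: l)
  | [], _ => rfl
  | _ :: x, l => .inr ⟨rfl, inlt_append_true x l⟩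

theorem inlt_append_false : ∀ x l : List Bool, inlt (x ++ false :: l) x
  | [], _ => rfl
  | _ :: x, l => .inr ⟨rfl, inlt_append_false x l⟩

theorem inlt_replicate_false : ∀ (y : List Bool) (k : ℕ), y.length < k →
    inlt (List.replicate k false) y
  | [], k + 1, _ => rfl
  | false :: y, k + 1, hk => .inr ⟨rfl, inlt_replicate_false y k (by simpa using hk)⟩
  | true :: _, _ + 1, _ => .inl ⟨rfl, rfl⟩

theorem inlt_append_true_replicate_false : ∀ {x y : List Bool}, inlt x y → ∀ {k : ℕ},
    y.length < k → inlt (x ++ true :: List.replicate k false) y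
  | [], _ :: y, rfl, _, hk => .inr ⟨rfl, inlt_replicate_false y _ (by simp at hk; omega)⟩
  | _ :: _, [], h, _, _ => h
  | _ :: _, _ :: _, .inl h, _, _ => .inl h
  | _ :: _, _ :: _, .inr ⟨hab, h⟩, _, hk =>
    .inr ⟨hab, inlt_append_true_replicate_false h (by simp at hk; omega)⟩

noncomputable section

namespace Order

variable {α β γ : Type*} [LinearOrder α] [LinearOrder β]

def IsDenseColoring (c : α → γ) : Prop :=
  ∀ i, ∀ a b, a < b → ∃ m, a < m ∧ m < b ∧ c m = i

theorem IsDenseColoring.exists_between_finsets [NoMinOrder α] [NoMaxOrder α]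
    [Nonempty α] {c : α → γ} (hc : IsDenseColoring c) (i : γ) (lo hi : Finset α)
    (lo_lt_hi : ∀ x ∈ lo, ∀ y ∈ hi, x < y) :
    ∃ m, c m = i ∧ (∀ x ∈ lo, x < m) ∧ ∀ y ∈ hi, m < y := by
  have : DenselyOrdered α := ⟨fun x y hxy => (hc i x y hxy).imp fun _ hm => ⟨hm.1, hm.2.1⟩⟩
  obtain ⟨x, lo_lt_x, x_lt_hi⟩ := Order.exists_between_finsets lo hi lo_lt_hi
  obtain ⟨y, x_lt_y, y_lt_hi⟩ := Order.exists_between_finsets {x} hi (by simpa using x_lt_hi)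
  obtain ⟨m, x_lt_m, m_lt_y, hm⟩ := hc i x y (x_lt_y x (Finset.mem_singleton_self x))
  exact ⟨m, hm, fun z hz => (lo_lt_x z hz).trans x_lt_m, fun z hz => m_lt_y.trans (y_lt_hi z hz)⟩

variable (cA : α → γ) (cB : β → γ)

def ColoredPartialIso : Type _ := {f : PartialIso α β // ∀ p ∈ f.val, cB p.2 = cA p.1}

namespace ColoredPartialIso

instance : Preorder (ColoredPartialIso cA cB) := Subtype.preorder _

instance : Inhabited (ColoredPartialIso cA cB) := ⟨⟨default, by simp [default]⟩⟩

variable {cA cB}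

theorem exists_across [NoMinOrder β] [NoMaxOrder β] [Nonempty β]
    (hB : IsDenseColoring cB) (f : ColoredPartialIso cA cB) (a : α) :
    ∃ b, cB b = cA a ∧ ∀ p ∈ f.val.val, cmp p.1 a = cmp p.2 b := by
  by_cases h : ∃ b, (a, b) ∈ f.val.val
  · obtain ⟨b, hb⟩ := h
    exact ⟨b, f.prop _ hb, fun p hp => f.val.prop _ hp _ hb⟩
  have lo_lt_hi : ∀ x ∈ {p ∈ f.val.val | p.1 < a}.image Prod.snd,
      ∀ y ∈ {p ∈ f.val.val | a < p.1}.image Prod.snd, x < y := by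
    simp only [Finset.mem_image, Finset.mem_filter]
    rintro _ ⟨p, ⟨hp, hpa⟩, rfl⟩ _ ⟨q, ⟨hq, haq⟩, rfl⟩
    exact (lt_iff_lt_of_cmp_eq_cmp (f.val.prop p hp q hq)).mp (hpa.trans haq)
  obtain ⟨b, hbc, lo_lt_b, b_lt_hi⟩ := hB.exists_between_finsets (cA a) _ _ lo_lt_hi
  refine ⟨b, hbc, fun p hp => ?_⟩
  rcases lt_trichotomy p.1 a with hpa | hpa | hpa
  · rw [(cmp_eq_lt_iff _ _).mpr hpa, (cmp_eq_lt_iff _ _).mpr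
      (lo_lt_b _ (Finset.mem_image_of_mem _ (Finset.mem_filter.mpr ⟨hp, hpa⟩)))]
  · exact (h ⟨p.2, hpa ▸ hp⟩).elim
  · rw [(cmp_eq_gt_iff _ _).mpr hpa, (cmp_eq_gt_iff _ _).mpr
      (b_lt_hi _ (Finset.mem_image_of_mem _ (Finset.mem_filter.mpr ⟨hp, hpa⟩)))]

def insert (f : ColoredPartialIso cA cB) (a : α) (b : β) (hc : cB b = cA a)
    (h : ∀ p ∈ f.val.val, cmp p.1 a = cmp p.2 b) : ColoredPartialIso cA cB :=
  ⟨⟨Insert.insert (a, b) f.val.val, by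
    simp only [Finset.mem_insert]
    rintro p (rfl | hp) q (rfl | hq)
    · simp
    · exact cmp_eq_cmp_symm.mp (h q hq)
    · exact h p hp
    · exact f.val.prop p hp q hq⟩, by
    simp only [Finset.mem_insert]
    rintro p (rfl | hp)
    exacts [hc, f.prop p hp]⟩

theorem le_insert (f : ColoredPartialIso cA cB) (a : α) (b : β) (hc h) :
    f ≤ f.insert a b hc h :=
  Finset.subset_insert _ _

theorem mem_insert (f : ColoredPartialIso cA cB) (a : α) (b : β) (hc h) :
    (a, b) ∈ (f.insert a b hc h).val.val :=
  Finset.mem_insert_self _ _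

def comm (f : ColoredPartialIso cA cB) : ColoredPartialIso cB cA :=
  ⟨f.val.comm, by
    intro p hp
    obtain ⟨q, hq, rfl⟩ := Finset.mem_image.mp hp
    exact (f.prop q hq).symm⟩

theorem mem_comm {f : ColoredPartialIso cA cB} {b : β} {a : α} :
    (b, a) ∈ f.comm.val.val ↔ (a, b) ∈ f.val.val := by
  simp [comm, PartialIso.comm, Subtype.map]

def definedAtLeft [NoMinOrder β] [NoMaxOrder β] [Nonempty β] (hB : IsDenseColoring cB) (a : α) :
    Cofinal (ColoredPartialIso cA cB) where
  carrier := {f | ∃ b, (a, b) ∈ f.val.val}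
  isCofinal f := by
    obtain ⟨b, hc, h⟩ := exists_across hB f a
    exact ⟨f.insert a b hc h, ⟨b, mem_insert ..⟩, le_insert ..⟩

def definedAtRight [NoMinOrder α] [NoMaxOrder α] [Nonempty α] (hA : IsDenseColoring cA) (b : β) :
    Cofinal (ColoredPartialIso cA cB) where
  carrier := {f | ∃ a, (a, b) ∈ f.val.val}
  isCofinal f := by
    obtain ⟨a, hc, h⟩ := exists_across hA f.comm b
    have h' : ∀ p ∈ f.val.val, cmp p.1 a = cmp p.2 b :=
      fun p hp => (h (p.2, p.1) (mem_comm.mpr hp)).symm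
    exact ⟨f.insert a b hc.symm h', ⟨a, mem_insert ..⟩, le_insert ..⟩

end ColoredPartialIso

theorem exists_orderIso_of_isDenseColoring [Countable α] [NoMinOrder α] [NoMaxOrder α]
    [Nonempty α] [Countable β] [NoMinOrder β] [NoMaxOrder β] [Nonempty β]
    {cA : α → γ} {cB : β → γ} (hA : IsDenseColoring cA) (hB : IsDenseColoring cB) :
    ∃ e : α ≃o β, ∀ a, cB (e a) = cA a := by
  cases nonempty_encodable α
  cases nonempty_encodable β
  let cofinals : α ⊕ β → Cofinal (ColoredPartialIso cA cB) :=
    Sum.elim (ColoredPartialIso.definedAtLeft hB) (ColoredPartialIso.definedAtRight hA)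
  let I := idealOfCofinals default cofinals
  have meets := cofinal_meets_idealOfCofinals default cofinals
  have forth : ∀ a, ∃ f ∈ I, ∃ b, (a, b) ∈ f.val.val := fun a =>
    let ⟨f, hf, hfI⟩ := meets (.inl a); ⟨f, hfI, hf⟩
  have back : ∀ b, ∃ g ∈ I, ∃ a, (a, b) ∈ g.val.val := fun b =>
    let ⟨g, hg, hgI⟩ := meets (.inr b); ⟨g, hgI, hg⟩
  choose f hfI b hb using forth
  choose g hgI a ha using back
  refine ⟨OrderIso.ofCmpEqCmp b a fun x y => ?_, fun x => (f x).prop _ (hb x)⟩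
  obtain ⟨m, -, hfm, hgm⟩ := I.directed _ (hfI x) _ (hgI y)
  exact m.val.prop _ (hfm (hb x)) _ (hgm (ha y))

end Order

end

/-- Binary words ordered by `<₂`; a wrapper, since `List Bool` already carries the
lexicographic order. -/
structure InorderWord where
  word : List Bool

namespace InorderWord

theorem word_injective : Function.Injective word := fun ⟨_⟩ ⟨_⟩ h => congrArg mk h

instance : LinearOrder InorderWord :=
  LinearOrder.lift' (inorderKey ∘ word) (inorderKey_injective.comp word_injective)

theorem lt_iff_inlt {x y : InorderWord} : x < y ↔ inlt x.word y.word :=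
  (inlt_iff_inorderKey_lt x.word y.word).symm

instance : NoMaxOrder InorderWord :=
  ⟨fun x => ⟨⟨x.word ++ [true]⟩, lt_iff_inlt.mpr (inlt_append_true x.word [])⟩⟩

instance : NoMinOrder InorderWord :=
  ⟨fun x => ⟨⟨x.word ++ [false]⟩, lt_iff_inlt.mpr (inlt_append_false x.word [])⟩⟩

instance : Nonempty InorderWord := ⟨⟨[]⟩⟩

instance : Countable InorderWord := word_injective.countable

open Fin.NatCast Fin.CommRing

def color (n : ℕ) [NeZero n] (w : InorderWord) : Fin n := w.word.length

theorem isDenseColoring_color (n : ℕ) [NeZero n] : Order.IsDenseColoring (color n) := by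
  rintro i ⟨x⟩ ⟨y⟩ hxy
  set j := (i - ((x.length + y.length + 2 : ℕ) : Fin n)).val
  have hxy : inlt x y := lt_iff_inlt.mp hxy
  refine ⟨⟨x ++ true :: List.replicate (y.length + 1 + j) false⟩,
    lt_iff_inlt.mpr (inlt_append_true _ _),
    lt_iff_inlt.mpr (inlt_append_true_replicate_false hxy (by omega)), ?_⟩
  simp only [color, List.length_append, List.length_cons, List.length_replicate]
  rw [show x.length + (y.length + 1 + j + 1) = (x.length + y.length + 2) + j by ring,
    Nat.cast_add, Fin.cast_val_eq_self, add_sub_cancel]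

end InorderWord

def RelIso.sigmaLexCongr {ι₁ ι₂ : Type*} {A : ι₁ → Type*} {B : ι₂ → Type*}
    {r₁ : ι₁ → ι₁ → Prop} {r₂ : ι₂ → ι₂ → Prop}
    {s₁ : ∀ i, A i → A i → Prop} {s₂ : ∀ j, B j → B j → Prop}
    (e : r₁ ≃r r₂) (F : ∀ i, s₁ i ≃r s₂ (e i)) : Sigma.Lex r₁ s₁ ≃r Sigma.Lex r₂ s₂ where
  toEquiv := Equiv.sigmaCongr e.toEquiv fun i => (F i).toEquiv
  map_rel_iff' := by
    rintro ⟨i, x⟩ ⟨j, y⟩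
    change Sigma.Lex r₂ s₂ ⟨e i, F i x⟩ ⟨e j, F j y⟩ ↔ _
    simp only [Sigma.lex_iff, e.map_rel_iff]
    refine or_congr_right ⟨fun ⟨h, hxy⟩ => ?_, fun ⟨h, hxy⟩ => ?_⟩
    · obtain rfl : i = j := e.injective h
      exact ⟨rfl, (F i).map_rel_iff.mp hxy⟩
    · obtain rfl : i = j := h
      exact ⟨rfl, (F i).map_rel_iff.mpr hxy⟩

theorem PDFA.run_cons_s7 {σ : Type} (M : PDFA σ) (q : M.State) (a : σ) (w : List σ) :
    M.run q (a :: w) = (M.step q a).bind fun q' => M.run q' w := by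
  simp [PDFA.run, List.foldlM]

def doubleLetters {α : Type*} : List α → List α
  | [] => []
  | a :: x => a :: a :: doubleLetters x

def shuffleCode (a v : List Bool) : List Bool := doubleLetters a ++ false :: true :: v

theorem inlt_shuffleCode_iff : ∀ {a b w v : List Bool},
    inlt (shuffleCode a w) (shuffleCode b v) ↔ inlt a b ∨ a = b ∧ inlt w v
  | [], [], w, v => by simp [shuffleCode, doubleLetters, inlt]
  | [], c :: b, w, v => by cases c <;> simp [shuffleCode, doubleLetters, inlt]
  | c :: a, [], w, v => by cases c <;> simp [shuffleCode, doubleLetters, inlt]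
  | c :: a, d :: b, w, v => by
    have ih := @inlt_shuffleCode_iff a b w v
    simp only [shuffleCode] at ih
    cases c <;> cases d <;> simp [shuffleCode, doubleLetters, inlt, ih]

theorem shuffleCode_inj : ∀ {a b w v : List Bool},
    shuffleCode a w = shuffleCode b v → a = b ∧ w = v
  | [], [], w, v, h => by simpa [shuffleCode, doubleLetters] using h
  | [], c :: b, w, v, h => by cases c <;> simp [shuffleCode, doubleLetters] at h
  | c :: a, [], w, v, h => by cases c <;> simp [shuffleCode, doubleLetters] at h
  | c :: a, d :: b, w, v, h => by
    simp only [shuffleCode, doubleLetters, List.cons_append, List.cons.injEq] at h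
    obtain ⟨rfl, -, h⟩ := h
    obtain ⟨rfl, rfl⟩ := shuffleCode_inj h
    exact ⟨rfl, rfl⟩

section ShuffleAutomaton

open Fin.NatCast Fin.CommRing

variable {n : ℕ} (M : Fin n → PDFA Bool)

/-- `count k`: a doubled word of length `≡ k` has been read; `pending k b`: the first letter `b`
of a pair has been read; `inner i q`: the automaton `M i` is being simulated. -/
inductive ShuffleState
  | count (k : Fin n)
  | pending (k : Fin n) (b : Bool)
  | inner (i : Fin n) (q : (M i).State)

instance : Finite (ShuffleState M) := by
  have := fun i => (M i).finState
  refine Finite.of_surjective (α := Fin n ⊕ (Fin n × Bool) ⊕ (Σ i, (M i).State))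
    (Sum.elim .count (Sum.elim (fun p => .pending p.1 p.2) fun p => .inner p.1 p.2)) ?_
  rintro (k | ⟨k, b⟩ | ⟨i, q⟩)
  exacts [⟨.inl k, rfl⟩, ⟨.inr (.inl (k, b)), rfl⟩, ⟨.inr (.inr ⟨i, q⟩), rfl⟩]

variable [NeZero n]

abbrev shuffleDFA : PDFA Bool where
  State := ShuffleState M
  finState := inferInstance
  start := .count 0
  accept := {s | ∃ i q, s = .inner i q ∧ q ∈ (M i).accept}
  step
    | .count k, b => some (.pending k b)
    | .pending k false, true => some (.inner k (M k).start)
    | .pending _ true, false => none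
    | .pending k _, _ => some (.count (k + 1))
    | .inner i q, b => ((M i).step q b).map (.inner i)

namespace shuffleDFA

theorem run_inner (i : Fin n) (q : (M i).State) (w : List Bool) :
    (shuffleDFA M).run (.inner i q) w = ((M i).run q w).map (.inner i) := by
  induction w generalizing q with
  | nil => rfl
  | cons b w ih =>
    rw [PDFA.run_cons_s7, PDFA.run_cons_s7]
    change (((M i).step q b).map (ShuffleState.inner i)).bind _ = _
    cases (M i).step q b with
    | none => rfl
    | some q' => exact ih q'

theorem run_count_doubleLetters_append (k : Fin n) (a w : List Bool) :
    (shuffleDFA M).run (.count k) (doubleLetters a ++ w) =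
      (shuffleDFA M).run (.count (k + a.length)) w := by
  induction a generalizing k with
  | nil => simp [doubleLetters]
  | cons b a ih =>
    have : (shuffleDFA M).run (.count k) (b :: b :: (doubleLetters a ++ w)) =
        (shuffleDFA M).run (.count (k + 1)) (doubleLetters a ++ w) := by
      cases b <;> rfl
    rw [doubleLetters, List.cons_append, List.cons_append, this, ih, List.length_cons,
      Nat.cast_succ, add_right_comm, add_assoc]

theorem run_count_shuffleCode (k : Fin n) (a v : List Bool) :
    (shuffleDFA M).run (.count k) (shuffleCode a v) =
      ((M (k + a.length)).run (M _).start v).map (.inner _) := by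
  rw [shuffleCode, run_count_doubleLetters_append, ← run_inner]
  rfl

theorem exists_shuffleCode_of_run_count : ∀ {w : List Bool} {k i : Fin n} {q : (M i).State},
    (shuffleDFA M).run (.count k) w = some (.inner i q) →
      ∃ a v, w = shuffleCode a v ∧ k + a.length = i ∧ (M i).run (M i).start v = some q
  | [], _, _, _, h => by cases h
  | [_], _, _, _, h => by cases h
  | false :: true :: v, k, i, q, h => by
    change (shuffleDFA M).run (.inner k (M k).start) v = _ at h
    rw [run_inner, Option.map_eq_some_iff] at h
    obtain ⟨q', hq', h⟩ := h
    cases h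
    exact ⟨[], v, rfl, by simp, hq'⟩
  | true :: false :: _, _, _, _, h => by cases h
  | false :: false :: w, k, i, q, h | true :: true :: w, k, i, q, h => by
    obtain ⟨a, v, rfl, hk, hv⟩ := exists_shuffleCode_of_run_count (k := k + 1) h
    refine ⟨_ :: a, v, rfl, ?_, hv⟩
    rw [← hk, List.length_cons, Nat.cast_succ]
    ring

theorem mem_lang_iff {w : List Bool} :
    w ∈ (shuffleDFA M).lang ↔ ∃ a v, w = shuffleCode a v ∧ v ∈ (M a.length).lang := by
  constructor
  · rintro ⟨_, ⟨i, q, rfl, hq⟩, h⟩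
    obtain ⟨a, v, rfl, hi, hv⟩ := exists_shuffleCode_of_run_count M h
    rw [zero_add] at hi
    subst hi
    exact ⟨a, v, rfl, q, hq, hv⟩
  · rintro ⟨a, v, rfl, q, hq, hv⟩
    refine ⟨.inner _ q, ⟨_, q, rfl, hq⟩, ?_⟩
    change (shuffleDFA M).run (.count 0) _ = _
    rw [run_count_shuffleCode, zero_add, hv]
    rfl

noncomputable def linguageIso :
    Sigma.Lex (· < ·) (fun a : InorderWord => fun x y : (M (a.color n)).lang => inlt x.1 y.1) ≃r
      fun x y : (shuffleDFA M).lang => inlt x.1 y.1 where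
  toEquiv := Equiv.ofBijective
    (fun p => ⟨shuffleCode p.1.word p.2.1, mem_lang_iff M |>.mpr ⟨_, _, rfl, p.2.2⟩⟩)
    ⟨fun ⟨⟨a⟩, v, hv⟩ ⟨⟨b⟩, w, hw⟩ h => by
      obtain ⟨rfl, rfl⟩ := shuffleCode_inj (congrArg Subtype.val h)
      rfl,
    fun ⟨w, hw⟩ => by
      obtain ⟨a, v, rfl, hv⟩ := (mem_lang_iff M).mp hw
      exact ⟨⟨⟨a⟩, v, hv⟩, rfl⟩⟩
  map_rel_iff' := by
    rintro ⟨⟨a⟩, v, hv⟩ ⟨⟨b⟩, w, hw⟩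
    change inlt (shuffleCode a v) (shuffleCode b w) ↔ _
    rw [inlt_shuffleCode_iff, Sigma.lex_iff, InorderWord.lt_iff_inlt]
    refine or_congr_right ⟨?_, ?_⟩
    · rintro ⟨rfl, hvw⟩
      exact ⟨rfl, hvw⟩
    · rintro ⟨h, hvw⟩
      cases h
      exact ⟨rfl, hvw⟩

end shuffleDFA

end ShuffleAutomaton

theorem isLinguage_shuffle_general (n : ℕ) (L : Fin n → Type)
    (r : ∀ i, L i → L i → Prop) (h : ∀ i, IsLinguageOf (L i) (r i))
    (χ : ℚ → Fin n) (hχ : ∀ i, ∀ a b : ℚ, a < b → ∃ q, a < q ∧ q < b ∧ χ q = i) :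
    IsLinguageOf ((q : ℚ) × L (χ q)) (Sigma.Lex (· < ·) (fun q => r (χ q))) := by
  have : NeZero n := ⟨(χ 0).pos.ne'⟩
  choose M e using h
  obtain ⟨φ, hφ⟩ :=
    Order.exists_orderIso_of_isDenseColoring hχ (InorderWord.isDenseColoring_color n)
  refine ⟨shuffleDFA M, ⟨(RelIso.sigmaLexCongr φ.toRelIsoLT fun q => ?_).trans
    (shuffleDFA.linguageIso M)⟩⟩
  exact hφ q ▸ (e (χ q)).some

/-- For every `n ≥ 1`, if the linear orders `L₀, …, L_{n−1}` are each
order-isomorphic to the linguage of a DFA over `{0,1}`, then so is their `n`-ary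
shuffle `Ξ(L₀, …, L_{n−1}) = Σ_{q ∈ ℚ} L_{χ(q)}`, where `χ : ℚ → {0, …, n−1}` is any
coloring all of whose color classes are dense in `ℚ`. -/
theorem isLinguage_shuffle (n : ℕ) (hn : 1 ≤ n) (L : Fin n → Type)
    (r : ∀ i, L i → L i → Prop) (h : ∀ i, IsLinguageOf (L i) (r i))
    (χ : ℚ → Fin n) (hχ : ∀ i, ∀ a b : ℚ, a < b → ∃ q, a < q ∧ q < b ∧ χ q = i) :
    IsLinguageOf ((q : ℚ) × L (χ q)) (Sigma.Lex (· < ·) (fun q => r (χ q))) :=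
  isLinguage_shuffle_general n L r h χ hχ
end

section
/- Let M be a good deterministic finite automaton over {0,1} with start state q_s. Then the linguage 𝐋(M) is non-scattered if and only if q_s is an η̄-state. -/
/-- A DFA is good if every state is reachable from the start state and some accept
state is reachable from it. -/
def PDFA.Good {σ : Type} (M : PDFA σ) : Prop :=
  ∀ q : M.State, (∃ x, M.run M.start x = some q) ∧ (∃ y, ∃ f ∈ M.accept, M.run q y = some f)

/-- `p` is an η-state: there are words `x₀, x₁` with `δ̂(p, 0x₀) = p = δ̂(p, 1x₁)`. -/
def PDFA.EtaState (M : PDFA Bool) (p : M.State) : Prop :=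
  (∃ x₀, M.run p (false :: x₀) = some p) ∧ (∃ x₁, M.run p (true :: x₁) = some p)

/-- `p` is an η̄-state: some state reachable from `p` is an η-state. -/
def PDFA.EtaBarState (M : PDFA Bool) (p : M.State) : Prop :=
  ∃ x q, M.run p x = some q ∧ M.EtaState q

/-- `(L, r)` is scattered: no subset of it is order-isomorphic to `ℚ`. -/
def Scattered (L : Type) (r : L → L → Prop) : Prop :=
  ¬ ∃ f : ℚ → L, ∀ a b : ℚ, a < b ↔ r (f a) (f b)

/-!
If `q_s` reaches an η-state `q` with loops `0x₀` and `1x₁`, then a path to `q`, followed by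
a word coded letter by letter by the doubled loops, both loops and a path to an accept state,
embeds all binary words under `<₂` into `L(M)`. They form a countable dense order, into which
`ℚ` embeds by Cantor's back-and-forth theorem.

Conversely, a copy of `ℚ` in a set of words splits at the longest common prefix `w` of its
elements into copies inside `w0{0,1}*` and `w1{0,1}*`. Hence a state `q` whose future language
contains a copy of `ℚ` has two successors `δ̂(q, w0)` and `δ̂(q, w1)` of the same kind. Among such
states reachable from `q_s`, take one, `p`, with a minimal set of reachable states: both of its
successors reach back to `p`, which closes a `0`-loop and a `1`-loop at `δ̂(p, w)`.
-/

/-- `<₂` is the lexicographic order after coding `0 ↦ 0`, `1 ↦ 2` and appending the end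
marker `1`. -/
def inorderCode (w : List Bool) : List ℕ := w.map (fun b => if b then 2 else 0) ++ [1]

lemma inorderCode_injective : Function.Injective inorderCode := by
  intro x y h
  refine List.map_injective_iff.2 (fun a b hab => ?_) (List.append_cancel_right h)
  cases a <;> cases b <;> simp_all

lemma inlt_iff_inorderCode_lt (x y : List Bool) : inlt x y ↔ inorderCode x < inorderCode y := by
  induction x generalizing y with
  | nil => cases y with
    | nil => simp [inlt, inorderCode]
    | cons b y => cases b <;> simp [inlt, inorderCode, List.cons_lt_cons_iff, -not_lt]
  | cons a x ih => cases y with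
    | nil => cases a <;> simp [inlt, inorderCode, List.cons_lt_cons_iff, -not_lt]
    | cons b y =>
      cases a <;> cases b <;> simp [inlt, inorderCode, List.cons_lt_cons_iff, -not_lt, ih]

lemma inlt_irrefl (x : List Bool) : ¬ inlt x x := by
  simp [inlt_iff_inorderCode_lt]

lemma inlt_trans {x y z : List Bool} (hxy : inlt x y) (hyz : inlt y z) : inlt x z := by
  rw [inlt_iff_inorderCode_lt] at *
  exact hxy.trans hyz

lemma inlt_asymm {x y : List Bool} (hxy : inlt x y) : ¬ inlt y x := by
  rw [inlt_iff_inorderCode_lt] at *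
  exact hxy.not_gt

lemma inlt_append_left_iff (p s t : List Bool) : inlt (p ++ s) (p ++ t) ↔ inlt s t := by
  induction p with
  | nil => rfl
  | cons a p ih => simp [inlt, ih]

lemma inlt_of_append_false_prefix {w y : List Bool} (h : w ++ [false] <+: y) : inlt y w := by
  obtain ⟨t, rfl⟩ := h
  simpa using (inlt_append_left_iff w (false :: t) []).2 (by simp [inlt])

lemma inlt_of_append_true_prefix {w y : List Bool} (h : w ++ [true] <+: y) : inlt w y := by
  obtain ⟨t, rfl⟩ := h
  simpa using (inlt_append_left_iff w [] (true :: t)).2 (by simp [inlt])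

lemma eq_or_exists_append_singleton_prefix {α : Type*} {w y : List α} (h : w <+: y) :
    y = w ∨ ∃ c, w ++ [c] <+: y := by
  obtain ⟨t, rfl⟩ := h
  cases t with
  | nil => simp
  | cons c t => exact Or.inr ⟨c, t, by simp⟩

lemma append_false_prefix_of_inlt {w y : List Bool} (hwy : w <+: y) (h : inlt y w) :
    w ++ [false] <+: y := by
  rcases eq_or_exists_append_singleton_prefix hwy with rfl | ⟨_ | _, hc⟩
  · exact absurd h (inlt_irrefl _)
  · exact hc
  · exact absurd h (inlt_asymm (inlt_of_append_true_prefix hc))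

lemma append_true_prefix_of_inlt {w y : List Bool} (hwy : w <+: y) (h : inlt w y) :
    w ++ [true] <+: y := by
  rcases eq_or_exists_append_singleton_prefix hwy with rfl | ⟨_ | _, hc⟩
  · exact absurd h (inlt_irrefl _)
  · exact absurd h (inlt_asymm (inlt_of_append_false_prefix hc))
  · exact hc

lemma prefix_of_inlt_of_inlt {p x y z : List Bool} (hxy : inlt x y) (hyz : inlt y z)
    (hx : p <+: x) (hz : p <+: z) : p <+: y := by
  induction p generalizing x y z with
  | nil => exact List.nil_prefix
  | cons c p ih =>
    obtain ⟨x, rfl⟩ := hx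
    obtain ⟨z, rfl⟩ := hz
    cases y with
    | nil => cases c <;> simp_all [inlt]
    | cons d y =>
      simp only [List.cons_append, inlt] at hxy hyz
      rcases hxy with ⟨rfl, rfl⟩ | ⟨rfl, hxy⟩
      · simp_all
      · rcases hyz with ⟨rfl, h⟩ | ⟨-, hyz⟩
        · simp at h
        · exact List.cons_prefix_cons.2 ⟨rfl, ih hxy hyz ⟨x, rfl⟩ ⟨z, rfl⟩⟩

lemma exists_inlt_between {x y : List Bool} (h : inlt x y) : ∃ z, inlt x z ∧ inlt z y := by
  induction x, y using inlt.induct with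
  | case1 => simp [inlt] at h
  | case2 b y =>
    obtain rfl : b = true := h
    exact ⟨true :: y ++ [false], by simp [inlt], inlt_of_append_false_prefix (List.prefix_refl _)⟩
  | case3 a x =>
    obtain rfl : a = false := h
    exact ⟨false :: x ++ [true], inlt_of_append_true_prefix (List.prefix_refl _), by simp [inlt]⟩
  | case4 a x b y ih =>
    rcases h with ⟨rfl, rfl⟩ | ⟨rfl, h⟩
    · exact ⟨[], by simp [inlt], by simp [inlt]⟩
    · obtain ⟨z, hxz, hzy⟩ := ih h
      exact ⟨a :: z, by simp [inlt, hxz], by simp [inlt, hzy]⟩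

def InWord := List Bool

noncomputable instance : LinearOrder InWord :=
  LinearOrder.lift' inorderCode inorderCode_injective

lemma InWord.lt_iff_inlt {x y : InWord} : x < y ↔ inlt x y :=
  (inlt_iff_inorderCode_lt x y).symm

instance : Countable InWord := inferInstanceAs (Countable (List Bool))

instance : Nontrivial InWord := inferInstanceAs (Nontrivial (List Bool))

instance : DenselyOrdered InWord where
  dense _ _ h := by
    simp only [InWord.lt_iff_inlt] at h ⊢
    exact exists_inlt_between h

namespace PDFA

variable {σ : Type} (M : PDFA σ)

def langFrom (q : M.State) : Set (List σ) := {w | ∃ f ∈ M.accept, M.run q w = some f}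

def reach (p : M.State) : Set M.State := {r | ∃ x, M.run p x = some r}

variable {M}

lemma run_append (q : M.State) (x y : List σ) :
    M.run q (x ++ y) = (M.run q x).bind (M.run · y) :=
  List.foldlM_append

lemma run_append_of_run_eq {q p : M.State} {x : List σ} (h : M.run q x = some p)
    (y : List σ) : M.run q (x ++ y) = M.run p y := by
  rw [run_append, h, Option.bind_some]

lemma run_append_eq_some {q r : M.State} {x y : List σ} :
    M.run q (x ++ y) = some r ↔ ∃ s, M.run q x = some s ∧ M.run s y = some r := by
  rw [run_append, Option.bind_eq_some_iff]

lemma mem_langFrom_append {q : M.State} {x y : List σ} :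
    x ++ y ∈ M.langFrom q ↔ ∃ r, M.run q x = some r ∧ y ∈ M.langFrom r := by
  cases h : M.run q x <;> simp [langFrom, run_append, h]

lemma reach_subset {p r : M.State} (hr : r ∈ M.reach p) : M.reach r ⊆ M.reach p := by
  obtain ⟨x, hx⟩ := hr
  rintro s ⟨y, hy⟩
  exact ⟨x ++ y, by rw [run_append_of_run_eq hx, hy]⟩

lemma run_flatMap_of_forall {q : M.State} {s : List σ} (g : σ → List σ)
    (hg : ∀ c, M.run q (g c) = some q) : M.run q (s.flatMap g) = some q := by
  induction s with
  | nil => rfl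
  | cons c s ih => rw [List.flatMap_cons, run_append_of_run_eq (hg c), ih]

end PDFA

section LoopCoding

variable (x₀ x₁ : List Bool)

def loopBlock (c : Bool) : List Bool := c :: bif c then x₁ else x₀

/-- Doubling every block keeps a letter of `s` from being confused with the end marker
`0x₀ 1x₁`. -/
def loopCoding (z s : List Bool) : List Bool :=
  s.flatMap (fun c => loopBlock x₀ x₁ c ++ loopBlock x₀ x₁ c) ++
    (loopBlock x₀ x₁ false ++ (loopBlock x₀ x₁ true ++ z))

lemma inlt_loopCoding {z s t : List Bool} (h : inlt s t) :
    inlt (loopCoding x₀ x₁ z s) (loopCoding x₀ x₁ z t) := by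
  induction s, t using inlt.induct with
  | case1 => simp [inlt] at h
  | case2 b t =>
    obtain rfl : b = true := h
    simp [loopCoding, loopBlock, inlt]
  | case3 a s =>
    obtain rfl : a = false := h
    simp [loopCoding, loopBlock, inlt, inlt_append_left_iff]
  | case4 a s b t ih =>
    rcases h with ⟨rfl, rfl⟩ | ⟨rfl, h⟩
    · simp [loopCoding, loopBlock, inlt]
    · simpa [loopCoding, List.append_assoc, inlt_append_left_iff] using ih h

end LoopCoding

lemma PDFA.loopCoding_mem_langFrom {M : PDFA Bool} {q : M.State} {x₀ x₁ z : List Bool}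
    (h₀ : M.run q (false :: x₀) = some q) (h₁ : M.run q (true :: x₁) = some q)
    (hz : z ∈ M.langFrom q) (s : List Bool) : loopCoding x₀ x₁ z s ∈ M.langFrom q := by
  have hblock : ∀ c, M.run q (loopBlock x₀ x₁ c) = some q := by
    rintro (_ | _) <;> assumption
  refine M.mem_langFrom_append.2 ⟨q, M.run_flatMap_of_forall _ fun c => ?_, ?_⟩
  · rw [M.run_append_of_run_eq (hblock c), hblock c]
  · exact M.mem_langFrom_append.2 ⟨q, h₀, M.mem_langFrom_append.2 ⟨q, h₁, hz⟩⟩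

theorem PDFA.exists_inlt_embedding_of_etaState {M : PDFA Bool} {p q : M.State} {u : List Bool}
    (hu : M.run p u = some q) (hq : M.EtaState q) (hne : (M.langFrom q).Nonempty) :
    ∃ f : ℚ → List Bool, (∀ a, f a ∈ M.langFrom p) ∧ ∀ a b, a < b ↔ inlt (f a) (f b) := by
  obtain ⟨⟨x₀, h₀⟩, ⟨x₁, h₁⟩⟩ := hq
  obtain ⟨z, hz⟩ := hne
  obtain ⟨e⟩ := Order.embedding_from_countable_to_dense ℚ InWord
  let F : InWord → InWord := fun s => u ++ loopCoding x₀ x₁ z s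
  have hF : StrictMono F := fun s t hst => InWord.lt_iff_inlt.2 <|
    (inlt_append_left_iff _ _ _).2 (inlt_loopCoding x₀ x₁ (InWord.lt_iff_inlt.1 hst))
  refine ⟨fun a => F (e a), fun a => ?_, fun a b => ?_⟩
  · exact M.mem_langFrom_append.2 ⟨q, hu, M.loopCoding_mem_langFrom h₀ h₁ hz _⟩
  · exact (hF.comp e.strictMono).lt_iff_lt.symm.trans InWord.lt_iff_inlt

lemma exists_maximal_common_prefix {α : Type*} {D : Set (List α)} (hD : D.Nonempty) :
    ∃ w, (∀ y ∈ D, w <+: y) ∧ ∀ c, ∃ y ∈ D, ¬ w ++ [c] <+: y := by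
  obtain ⟨x, hx⟩ := hD
  have hfin : {v | ∀ y ∈ D, v <+: y}.Finite :=
    (List.finite_toSet x.inits).subset fun v hv => List.mem_inits _ _ |>.2 (hv x hx)
  obtain ⟨w, hw, hmax⟩ :=
    hfin.exists_maximalFor List.length _ ⟨[], fun y _ => List.nil_prefix⟩
  refine ⟨w, hw, fun c => ?_⟩
  by_contra! hc
  simpa using hmax hc (by simp)

/-- Sets of words of order type `η`, that of `ℚ`, under `<₂`. -/
structure IsInorderDense (D : Set (List Bool)) : Prop where
  nonempty : D.Nonempty
  exists_lt : ∀ x ∈ D, ∃ y ∈ D, inlt y x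
  exists_gt : ∀ x ∈ D, ∃ y ∈ D, inlt x y
  exists_between : ∀ x ∈ D, ∀ z ∈ D, inlt x z → ∃ y ∈ D, inlt x y ∧ inlt y z

def ContainsInorderDense (S : Set (List Bool)) : Prop := ∃ D ⊆ S, IsInorderDense D

lemma ContainsInorderDense.mono {S T : Set (List Bool)} (h : ContainsInorderDense S)
    (hST : S ⊆ T) : ContainsInorderDense T :=
  let ⟨D, hDS, hD⟩ := h
  ⟨D, hDS.trans hST, hD⟩

lemma isInorderDense_range {f : ℚ → List Bool} (hf : ∀ a b, a < b ↔ inlt (f a) (f b)) :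
    IsInorderDense (Set.range f) where
  nonempty := Set.range_nonempty f
  exists_lt := by
    rintro _ ⟨a, rfl⟩
    exact ⟨f (a - 1), ⟨_, rfl⟩, (hf _ _).1 (by linarith)⟩
  exists_gt := by
    rintro _ ⟨a, rfl⟩
    exact ⟨f (a + 1), ⟨_, rfl⟩, (hf _ _).1 (by linarith)⟩
  exists_between := by
    rintro _ ⟨a, rfl⟩ _ ⟨b, rfl⟩ hfab
    have hab := (hf a b).2 hfab
    exact ⟨f ((a + b) / 2), ⟨_, rfl⟩, (hf _ _).1 (by linarith), (hf _ _).1 (by linarith)⟩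

namespace IsInorderDense

variable {D : Set (List Bool)}

lemma sep_between (hD : IsInorderDense D) {x z : List Bool} (hx : x ∈ D) (hz : z ∈ D)
    (hxz : inlt x z) : IsInorderDense {y ∈ D | inlt x y ∧ inlt y z} where
  nonempty := by
    obtain ⟨y, hy, hxy, hyz⟩ := hD.exists_between x hx z hz hxz
    exact ⟨y, hy, hxy, hyz⟩
  exists_lt := by
    rintro y ⟨hy, hxy, hyz⟩
    obtain ⟨v, hv, hxv, hvy⟩ := hD.exists_between x hx y hy hxy
    exact ⟨v, ⟨hv, hxv, inlt_trans hvy hyz⟩, hvy⟩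
  exists_gt := by
    rintro y ⟨hy, hxy, hyz⟩
    obtain ⟨v, hv, hyv, hvz⟩ := hD.exists_between y hy z hz hyz
    exact ⟨v, ⟨hv, inlt_trans hxy hyv, hvz⟩, hyv⟩
  exists_between := by
    rintro y ⟨hy, hxy, -⟩ y' ⟨hy', -, hy'z⟩ hyy'
    obtain ⟨v, hv, hyv, hvy'⟩ := hD.exists_between y hy y' hy' hyy'
    exact ⟨v, ⟨hv, inlt_trans hxy hyv, inlt_trans hvy' hy'z⟩, hyv, hvy'⟩

lemma leftQuotient (hD : IsInorderDense D) {u : List Bool} (hu : ∀ y ∈ D, u <+: y) :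
    IsInorderDense {v | u ++ v ∈ D} := by
  have lift : ∀ y ∈ D, ∃ v, u ++ v ∈ D ∧ u ++ v = y := fun y hy =>
    let ⟨v, hv⟩ := hu y hy
    ⟨v, hv ▸ hy, hv⟩
  refine ⟨?_, fun x hx => ?_, fun x hx => ?_, fun x hx z hz hxz => ?_⟩
  · obtain ⟨y, hy⟩ := hD.nonempty
    obtain ⟨v, hv, -⟩ := lift y hy
    exact ⟨v, hv⟩
  · obtain ⟨y, hy, hyx⟩ := hD.exists_lt _ hx
    obtain ⟨v, hv, rfl⟩ := lift y hy
    exact ⟨v, hv, (inlt_append_left_iff u _ _).1 hyx⟩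
  · obtain ⟨y, hy, hxy⟩ := hD.exists_gt _ hx
    obtain ⟨v, hv, rfl⟩ := lift y hy
    exact ⟨v, hv, (inlt_append_left_iff u _ _).1 hxy⟩
  · obtain ⟨y, hy, hxy, hyz⟩ :=
      hD.exists_between _ hx _ hz ((inlt_append_left_iff u _ _).2 hxz)
    obtain ⟨v, hv, rfl⟩ := lift y hy
    exact ⟨v, hv, (inlt_append_left_iff u _ _).1 hxy, (inlt_append_left_iff u _ _).1 hyz⟩

lemma containsInorderDense_leftQuotient (hD : IsInorderDense D) {u x z : List Bool}
    (hx : x ∈ D) (hz : z ∈ D) (hxz : inlt x z) (hux : u <+: x) (huz : u <+: z) :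
    ContainsInorderDense {v | u ++ v ∈ D} :=
  ⟨_, fun _ hv => hv.1, (hD.sep_between hx hz hxz).leftQuotient
    fun _ hy => prefix_of_inlt_of_inlt hy.2.1 hy.2.2 hux huz⟩

end IsInorderDense

lemma IsInorderDense.exists_split {D : Set (List Bool)} (hD : IsInorderDense D) :
    ∃ w, ∀ c, ContainsInorderDense {v | w ++ [c] ++ v ∈ D} := by
  obtain ⟨w, hw, hmax⟩ := exists_maximal_common_prefix hD.nonempty
  obtain ⟨⟨x, hx, hx0⟩, ⟨z, hz, hz1⟩⟩ :
      (∃ x ∈ D, w ++ [false] <+: x) ∧ ∃ z ∈ D, w ++ [true] <+: z := by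
    by_cases hwD : w ∈ D
    · obtain ⟨x, hx, hxw⟩ := hD.exists_lt w hwD
      obtain ⟨z, hz, hwz⟩ := hD.exists_gt w hwD
      exact ⟨⟨x, hx, append_false_prefix_of_inlt (hw x hx) hxw⟩,
        ⟨z, hz, append_true_prefix_of_inlt (hw z hz) hwz⟩⟩
    · have side : ∀ c, ∀ y ∈ D, ¬ w ++ [c] <+: y → w ++ [!c] <+: y := by
        intro c y hy hyc
        rcases eq_or_exists_append_singleton_prefix (hw y hy) with rfl | ⟨c', hc'⟩
        · exact absurd hy hwD
        · cases c <;> cases c' <;> simp_all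
      obtain ⟨x, hx, hx1⟩ := hmax true
      obtain ⟨z, hz, hz0⟩ := hmax false
      exact ⟨⟨x, hx, side true x hx hx1⟩, ⟨z, hz, side false z hz hz0⟩⟩
  refine ⟨w, fun c => ?_⟩
  cases c
  · obtain ⟨y, hy, hyx⟩ := hD.exists_lt x hx
    have hy0 := append_false_prefix_of_inlt (hw y hy)
      (inlt_trans hyx (inlt_of_append_false_prefix hx0))
    exact hD.containsInorderDense_leftQuotient hy hx hyx hy0 hx0
  · obtain ⟨y, hy, hzy⟩ := hD.exists_gt z hz
    have hy1 := append_true_prefix_of_inlt (hw y hy)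
      (inlt_trans (inlt_of_append_true_prefix hz1) hzy)
    exact hD.containsInorderDense_leftQuotient hz hy hzy hz1 hy1

lemma ContainsInorderDense.exists_split {S : Set (List Bool)} (h : ContainsInorderDense S) :
    ∃ w, ∀ c, ContainsInorderDense {v | w ++ [c] ++ v ∈ S} :=
  let ⟨_, hDS, hD⟩ := h
  let ⟨w, hw⟩ := hD.exists_split
  ⟨w, fun c => (hw c).mono fun _ hv => hDS hv⟩

namespace PDFA

variable {M : PDFA Bool}

lemma etaBarState_of_forall_split (P : Set M.State)
    (hP : ∀ p ∈ P, ∃ w, ∀ c, ∃ r, M.run p (w ++ [c]) = some r ∧ r ∈ P)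
    {p : M.State} (hp : p ∈ P) : M.EtaBarState p := by
  have := M.finState
  obtain ⟨q, ⟨hqP, hpq⟩, hmin⟩ := (Set.toFinite {r | r ∈ P ∧ r ∈ M.reach p}).exists_minimalFor
    M.reach _ ⟨p, hp, [], rfl⟩
  obtain ⟨w, hw⟩ := hP q hqP
  have hret : ∀ c, ∃ r v, M.run q (w ++ [c]) = some r ∧ M.run r v = some q := by
    intro c
    obtain ⟨r, hr, hrP⟩ := hw c
    have hrq : r ∈ M.reach q := ⟨_, hr⟩
    obtain ⟨v, hv⟩ := hmin ⟨hrP, reach_subset hpq hrq⟩ (reach_subset hrq) ⟨[], rfl⟩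
    exact ⟨r, v, hr, hv⟩
  obtain ⟨_, -, h₀, -⟩ := hret false
  obtain ⟨s, hs, -⟩ := run_append_eq_some.1 h₀
  have hloop : ∀ c, ∃ x, M.run s (c :: x) = some s := by
    intro c
    obtain ⟨r, v, hr, hv⟩ := hret c
    rw [run_append_of_run_eq hs] at hr
    exact ⟨v ++ w, by
      rw [← List.singleton_append, run_append_of_run_eq hr, run_append_of_run_eq hv, hs]⟩
  obtain ⟨y, hy⟩ := hpq
  exact ⟨y ++ w, s, by rw [run_append_of_run_eq hy, hs], hloop false, hloop true⟩

lemma exists_run_of_containsInorderDense {p : M.State} {x : List Bool}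
    (h : ContainsInorderDense {v | x ++ v ∈ M.langFrom p}) :
    ∃ r, M.run p x = some r ∧ ContainsInorderDense (M.langFrom r) := by
  obtain ⟨D, hDS, hD⟩ := h
  obtain ⟨v, hv⟩ := hD.nonempty
  obtain ⟨r, hr, -⟩ := mem_langFrom_append.1 (hDS hv)
  refine ⟨r, hr, D, fun v hv => ?_, hD⟩
  obtain ⟨r', hr', hv'⟩ := mem_langFrom_append.1 (hDS hv)
  obtain rfl : r = r' := Option.some_injective _ (hr.symm.trans hr')
  exact hv'

theorem etaBarState_of_containsInorderDense {p : M.State}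
    (h : ContainsInorderDense (M.langFrom p)) : M.EtaBarState p :=
  etaBarState_of_forall_split {r | ContainsInorderDense (M.langFrom r)}
    (fun _ hq => let ⟨w, hw⟩ := hq.exists_split
      ⟨w, fun c => exists_run_of_containsInorderDense (hw c)⟩) h

end PDFA

/-- For a good DFA `M` over `{0,1}` with start state `q_s`, the
linguage `𝐋(M)` is non-scattered if and only if `q_s` is an η̄-state. -/
theorem linguage_nonscattered_iff_etaBar (M : PDFA Bool) (hM : M.Good) :
    ¬ Scattered {w : List Bool // w ∈ M.lang} (fun x y => inlt x.1 y.1) ↔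
      M.EtaBarState M.start := by
  constructor
  · intro h
    obtain ⟨f, hf⟩ := not_not.1 h
    exact PDFA.etaBarState_of_containsInorderDense
      ⟨_, Set.range_subset_iff.2 fun a => (f a).2, isInorderDense_range hf⟩
  · rintro ⟨u, q, hu, hq⟩ hsc
    obtain ⟨f, hfL, hf⟩ := PDFA.exists_inlt_embedding_of_etaState hu hq (hM q).2
    exact hsc ⟨fun a => ⟨f a, hfL a⟩, hf⟩
end
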